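/- A pair (X,Y) of interpretations with X ⊆ Y is a ⟨U,B⟩-model of a program P (where the head alphabet is the full universe U) iff Y ⊨ P, X ⊨ P^Y, and for all X' with X ⊊ X' ⊊ Y and X'∩B = X∩B, X' ⊭ P^Y. -/

import Mathlib

structure Rule (α : Type*) where
  head : Finset α
  pbody : Finset α
  nbody : Finset α
deriving DecidableEq

abbrev Program (α : Type*) := Finset (Rule α)

variable {α : Type*} [DecidableEq α]

/-- An interpretation `Y` satisfies a rule. -/
def satRule (Y : Finset α) (r : Rule α) : Prop :=
  r.pbody ⊆ Y → r.nbody ∩ Y = ∅ → (r.head ∩ Y).Nonempty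

/-- `Y` is a model of the program `P`. -/
def satProg (Y : Finset α) (P : Program α) : Prop := ∀ r ∈ P, satRule Y r

/-- The Gelfond–Lifschitz reduct `P^Y`. -/
def reduct (P : Program α) (Y : Finset α) : Program α :=
  (P.filter (fun r => r.nbody ∩ Y = ∅)).image (fun r => ⟨r.head, r.pbody, ∅⟩)

/-- `Y` is an answer set of `P`: a minimal model of `P^Y`. -/
def isAS (P : Program α) (Y : Finset α) : Prop :=
  satProg Y (reduct P Y) ∧ ∀ Z, Z ⊂ Y → ¬ satProg Z (reduct P Y)

def heads (P : Program α) : Finset α := P.biUnion Rule.head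
def bodies (P : Program α) : Finset α := P.biUnion (fun r => r.pbody ∪ r.nbody)

/-- A positive program: no default negation. -/
def Positive (P : Program α) : Prop := ∀ r ∈ P, r.nbody = ∅

/-- A unary program: only facts `a ←` and rules `a ← b`. -/
def Unary (P : Program α) : Prop :=
  ∀ r ∈ P, r.nbody = ∅ ∧ r.head.card = 1 ∧ r.pbody.card ≤ 1

/-- Membership in the class `C_⟨H,B⟩`. -/
def inClass (H B : Finset α) (P : Program α) : Prop := heads P ⊆ H ∧ bodies P ⊆ B

/-- `V ⪯_H^B Z`. -/
def preceq (H B V Z : Finset α) : Prop := V ∩ H ⊆ Z ∩ H ∧ Z ∩ B ⊆ V ∩ B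

/-- `V ≺_H^B Z`. -/
def prec (H B V Z : Finset α) : Prop := preceq H B V Z ∧ V ∩ (H ∪ B) ≠ Z ∩ (H ∪ B)

/-- `Y` is an `H`-total model of `P`. -/
def Htotal (H : Finset α) (P : Program α) (Y : Finset α) : Prop :=
  satProg Y P ∧ ∀ Z, Z ⊂ Y → satProg Z (reduct P Y) → Z ∩ H ⊂ Y ∩ H

/-- The containment `P ⊆_⟨H,B⟩ Q`. -/
def containsHB (H B : Finset α) (P Q : Program α) : Prop :=
  ∀ R : Program α, inClass H B R → ∀ Y, isAS (P ∪ R) Y → isAS (Q ∪ R) Y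

/-- The equivalence `P ≡_⟨H,B⟩ Q`. -/
def equivHB (H B : Finset α) (P Q : Program α) : Prop :=
  ∀ R : Program α, inClass H B R → ∀ Y, isAS (P ∪ R) Y ↔ isAS (Q ∪ R) Y

/-- A witness against `P ⊆_⟨H,B⟩ Q`. -/
def Witness (H B : Finset α) (P Q : Program α) (X Y : Finset α) : Prop :=
  X ⊆ Y ∧ Htotal H P Y ∧
    (satProg Y Q → X ⊂ Y ∧ satProg X (reduct Q Y) ∧
      ∀ X', preceq H B X X' → X' ⊂ Y → ¬ satProg X' (reduct P Y))

/-- `(X,Y)` is `⪯_H^B`-maximal for `P`. -/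
def maximalHB (H B : Finset α) (P : Program α) (X Y : Finset α) : Prop :=
  satProg X (reduct P Y) ∧ ∀ X', prec H B X X' → X' ⊂ Y → ¬ satProg X' (reduct P Y)

/-- `(X,Y)` is an `⟨H,B⟩`-model of `P`. -/
def HBmodel (H B : Finset α) (P : Program α) (X Y : Finset α) : Prop :=
  X ⊆ Y ∧ Htotal H P Y ∧
    (X ⊂ Y → ∃ X', X' ⊂ Y ∧ X' ∩ (H ∪ B) = X ∧ maximalHB H B P X' Y)

/-! With `H = U` we have `X' ∩ (H ∪ B) = X'`, so the witness `X'` of an `⟨U,B⟩`-model is `X`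
itself, `U`-totality of `Y` is just `Y ⊨ P`, and `X ≺ X'` means `X ⊊ X'` with `X' ∩ B = X ∩ B`.
When `X = Y` the remaining condition `X ⊨ P^Y` follows from `Y ⊨ P`. -/

open Finset

theorem satProg_reduct_self {P : Program α} {Y : Finset α} (hY : satProg Y P) :
    satProg Y (reduct P Y) := by
  intro r hr
  simp only [reduct, mem_image, mem_filter] at hr
  obtain ⟨r', ⟨hr'P, hr'neg⟩, rfl⟩ := hr
  exact fun hpos _ => hY r' hr'P hpos hr'neg

section Univ

variable [Fintype α] {P : Program α} {B V X Y : Finset α}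

theorem Htotal_univ_iff : Htotal univ P Y ↔ satProg Y P := by
  simp only [Htotal, inter_univ, and_iff_left_iff_imp]
  exact fun _ _ hZY _ => hZY

theorem prec_univ_iff : prec univ B V X ↔ V ⊂ X ∧ X ∩ B ⊆ V ∩ B := by
  simp only [prec, preceq, inter_univ, union_eq_left.2 (subset_univ B), ssubset_iff_subset_ne]
  tauto

theorem maximalHB_univ_iff :
    maximalHB univ B P X Y ↔ satProg X (reduct P Y) ∧
      ∀ X', X ⊂ X' → X' ⊂ Y → X' ∩ B = X ∩ B → ¬ satProg X' (reduct P Y) := by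
  have hB : ∀ X', X ⊂ X' → (X' ∩ B ⊆ X ∩ B ↔ X' ∩ B = X ∩ B) := fun X' hXX' =>
    ⟨fun h => h.antisymm (inter_subset_inter_right hXX'.subset), fun h => h.le⟩
  simp only [maximalHB, prec_univ_iff, and_imp]
  refine and_congr_right fun _ => forall_congr' fun X' => ?_
  exact ⟨fun h hXX' hX'Y hX'B => h hXX' ((hB X' hXX').2 hX'B) hX'Y,
    fun h hXX' hX'B hX'Y => h hXX' hX'Y ((hB X' hXX').1 hX'B)⟩

theorem HBmodel_univ_iff :
    HBmodel univ B P X Y ↔ X ⊆ Y ∧ satProg Y P ∧ (X ⊂ Y → maximalHB univ B P X Y) := by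
  simp only [HBmodel, Htotal_univ_iff, union_eq_left.2 (subset_univ B), inter_univ]
  exact and_congr_right fun _ => and_congr_right fun _ => imp_congr_right fun hXY =>
    ⟨fun ⟨_, _, hX'X, hmax⟩ => hX'X ▸ hmax, fun hmax => ⟨X, hXY, rfl, hmax⟩⟩

end Univ

theorem body_relativized_models [Fintype α] (P : Program α) (B X Y : Finset α)
    (hXY : X ⊆ Y) :
    HBmodel (Finset.univ : Finset α) B P X Y ↔
      satProg Y P ∧ satProg X (reduct P Y) ∧
        ∀ X', X ⊂ X' → X' ⊂ Y → X' ∩ B = X ∩ B → ¬ satProg X' (reduct P Y) := by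
  rw [HBmodel_univ_iff, maximalHB_univ_iff]
  rcases hXY.ssubset_or_eq with hXY' | rfl
  · simp only [hXY, hXY', true_and, forall_const]
  · constructor
    · rintro ⟨-, hX, -⟩
      exact ⟨hX, satProg_reduct_self hX, fun X' h h' => absurd (h.trans h') (lt_irrefl X)⟩
    · rintro ⟨hX, -, -⟩
      exact ⟨subset_rfl, hX, fun h => absurd h (ssubset_irrefl X)⟩
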